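/- Let D be a connected Eulerian digraph and let a be a partition of E(D) into directed cycles (a minimal element of T(D)). Then the up-set of a in T(D) is lattice-isomorphic to the bond lattice L(G_a), where G_a is the intersection graph of the cycles in a. The isomorphism sends a partition {D₁, …, D_k} ∈ T(D) refining-above a to the partition of a into the groups of cycles {β ∈ a : E(β) ⊆ E(D_i)}. -/

import Mathlib

/-- `l` is a nonempty closed directed trail in the digraph with edge type `E` and
endpoint maps `src`, `tgt`: the edges are distinct and consecutive (cyclically). -/
def IsClosedTrail {V E : Type*} (src tgt : E → V) (l : List E) : Prop :=
  l ≠ [] ∧ l.Nodup ∧ List.Chain' (fun e f => tgt e = src f) l ∧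
  ∀ h : l ≠ [], tgt (l.getLast h) = src (l.head h)

/-- `l` is an Eulerian closed trail of the subdigraph with edge set `A`. -/
def IsEulerianOn {V E : Type*} (src tgt : E → V) (A : Set E) (l : List E) : Prop :=
  IsClosedTrail src tgt l ∧ ∀ e, e ∈ l ↔ e ∈ A

/-- The edge set `A` is the edge set of a (connected) Eulerian subdigraph. -/
def IsEulerianSet {V E : Type*} (src tgt : E → V) (A : Set E) : Prop :=
  ∃ l, IsEulerianOn src tgt A l

/-- The number of Eulerian circuits of the subdigraph with edge set `A`: Eulerian closed
trails up to cyclic rotation of the edges. -/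
noncomputable def numEC {V E : Type*} (src tgt : E → V) (A : Set E) : ℕ :=
  Nat.card (Quot fun l₁ l₂ : {l : List E // IsEulerianOn src tgt A l} =>
    ∃ m, (l₂ : List E) = (l₁ : List E).rotate m)

/-- The edge set `A` is the edge set of a directed cycle (an Eulerian closed trail with
no repeated vertices). -/
def IsCycleSet {V E : Type*} (src tgt : E → V) (A : Set E) : Prop :=
  ∃ l, IsEulerianOn src tgt A l ∧ (l.map src).Nodup

/-- The partition (setoid) `s` of the edge set partitions it into blocks each of which is
the edge set of a connected Eulerian subdigraph; these are the elements of `T(D)`. -/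
def EulerianPartition {V E : Type*} (src tgt : E → V) (s : Setoid E) : Prop :=
  ∀ x : E, IsEulerianSet src tgt {y | s.r x y}

/-- A set `S` is connected under the relation `R`. -/
def ConnSet {B : Type*} (R : B → B → Prop) (A : Set B) : Prop :=
  A.Nonempty ∧ ∀ x ∈ A, ∀ y ∈ A,
    Relation.ReflTransGen (fun u v => u ∈ A ∧ v ∈ A ∧ u ≠ v ∧ R u v) x y

/-- Adjacency in the intersection graph `G_a` of a partition `a` of the edge set into
cycles: two distinct cycles are adjacent iff they share a vertex of `D`. -/
def InterAdj {V E : Type*} (src tgt : E → V) (a : Setoid E)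
    (q₁ q₂ : Quotient a) : Prop :=
  q₁ ≠ q₂ ∧ ∃ e f : E, Quotient.mk a e = q₁ ∧ Quotient.mk a f = q₂ ∧
    ({src e, tgt e} ∩ {src f, tgt f} : Set V).Nonempty

section Aux
variable {V E : Type*} {src tgt : E → V}

lemma IsClosedTrail.rotate1 {l : List E} (h : IsClosedTrail src tgt l) :
    IsClosedTrail src tgt (l.rotate 1) := by
  obtain ⟨hne, hnd, hch, hcl⟩ := h
  match l, hne with
  | [e], _ =>
    refine ⟨by simp [List.rotate], by simpa using hnd, by rw [List.rotate_singleton]; exact List.isChain_singleton e, fun h' => ?_⟩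
    have := hcl (by simp)
    simpa using this
  | e :: e' :: t, _ =>
    have hrot : (e :: e' :: t).rotate 1 = (e' :: t) ++ [e] := by
      simp [List.rotate_cons_succ]
    rw [hrot]
    have hstep : tgt e = src e' := (List.isChain_cons_cons.mp hch).1
    refine ⟨by simp, ?_, ?_, ?_⟩
    · have := ((e :: e' :: t).rotate_perm 1).symm.nodup hnd
      rwa [hrot] at this
    · refine List.isChain_append.mpr ⟨(List.isChain_cons_cons.mp hch).2, List.isChain_singleton e, ?_⟩
      intro x hx y hy
      simp only [List.head?_cons, Option.mem_def, Option.some.injEq] at hy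
      subst hy
      have hx' : x = (e' :: t).getLast (by simp) := by
        rw [List.getLast?_eq_getLast (by simp : (e' :: t) ≠ []), Option.mem_def,
          Option.some.injEq] at hx
        exact hx.symm
      subst hx'
      have := hcl (by simp)
      rw [List.getLast_cons (by simp)] at this
      simpa using this
    · intro h'
      have h1 : ((e' :: t) ++ [e]).getLast h' = e := by
        simp [List.getLast_append]
      have h2 : ((e' :: t) ++ [e]).head h' = e' := by
        simp [List.head_append]
      rw [h1, h2, hstep]

lemma IsClosedTrail.rotate {l : List E} (h : IsClosedTrail src tgt l) (m : ℕ) :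
    IsClosedTrail src tgt (l.rotate m) := by
  induction m with
  | zero => simpa using h
  | succ m ih =>
    have : l.rotate (m + 1) = (l.rotate m).rotate 1 := by rw [List.rotate_rotate]
    rw [this]
    exact ih.rotate1

/-- Any vertex of an edge of a closed trail is the source of some edge of the trail. -/
lemma exists_src_eq {l : List E} {e : E} {v : V} (h : IsClosedTrail src tgt l)
    (he : e ∈ l) (hv : v = src e ∨ v = tgt e) : ∃ f ∈ l, src f = v := by
  rcases hv with rfl | rfl
  · exact ⟨e, he, rfl⟩
  · obtain ⟨l₁, l₂, rfl⟩ := List.append_of_mem he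
    cases l₂ with
    | nil =>
      have hne : l₁ ++ [e] ≠ [] := by simp
      refine ⟨(l₁ ++ [e]).head hne, List.head_mem hne, ?_⟩
      have hcl := h.2.2.2 hne
      have hlast : (l₁ ++ [e]).getLast hne = e := by simp [List.getLast_append]
      rw [hlast] at hcl
      exact hcl.symm
    | cons f t =>
      have hch := h.2.2.1
      have : List.Chain' (fun e f => tgt e = src f) (e :: f :: t) :=
        (List.isChain_append.mp hch).2.1
      exact ⟨f, by simp, ((List.isChain_cons_cons.mp this).1).symm⟩

/-- A closed trail can be rotated to start at any of its edges. -/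
lemma exists_trail_head {l : List E} {f : E} (h : IsClosedTrail src tgt l) (hf : f ∈ l) :
    ∃ l', IsClosedTrail src tgt l' ∧ l'.head? = some f ∧ ∀ e, e ∈ l' ↔ e ∈ l := by
  obtain ⟨l₁, l₂, rfl⟩ := List.append_of_mem hf
  refine ⟨(l₁ ++ f :: l₂).rotate l₁.length, h.rotate _, ?_, fun e => List.mem_rotate⟩
  rw [List.rotate_eq_drop_append_take (by simp), List.drop_left]
  simp

/-- Splicing two edge-disjoint closed trails sharing a vertex. -/
lemma splice {A₁ A₂ : Set E} {l₁ l₂ : List E} (h₁ : IsEulerianOn src tgt A₁ l₁)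
    (h₂ : IsEulerianOn src tgt A₂ l₂) (hdisj : ∀ e, e ∈ A₁ → e ∉ A₂) {v : V}
    (hv₁ : ∃ e ∈ l₁, v = src e ∨ v = tgt e) (hv₂ : ∃ e ∈ l₂, v = src e ∨ v = tgt e) :
    IsEulerianSet src tgt (A₁ ∪ A₂) := by
  obtain ⟨e₁, he₁, hve₁⟩ := hv₁
  obtain ⟨f₁, hf₁l, hf₁⟩ := exists_src_eq h₁.1 he₁ hve₁
  obtain ⟨e₂, he₂, hve₂⟩ := hv₂
  obtain ⟨f₂, hf₂l, hf₂⟩ := exists_src_eq h₂.1 he₂ hve₂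
  obtain ⟨l₁', ht₁, hh₁, hm₁⟩ := exists_trail_head h₁.1 hf₁l
  obtain ⟨l₂', ht₂, hh₂, hm₂⟩ := exists_trail_head h₂.1 hf₂l
  have hne₁ : l₁' ≠ [] := ht₁.1
  have hne₂ : l₂' ≠ [] := ht₂.1
  have hmem₁ : ∀ e, e ∈ l₁' ↔ e ∈ A₁ := fun e => (hm₁ e).trans (h₁.2 e)
  have hmem₂ : ∀ e, e ∈ l₂' ↔ e ∈ A₂ := fun e => (hm₂ e).trans (h₂.2 e)
  have hhead₁ : l₁'.head hne₁ = f₁ := by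
    have := List.head?_eq_head hne₁; rw [hh₁] at this; exact (Option.some.inj this).symm
  have hhead₂ : l₂'.head hne₂ = f₂ := by
    have := List.head?_eq_head hne₂; rw [hh₂] at this; exact (Option.some.inj this).symm
  refine ⟨l₁' ++ l₂', ⟨by simp [hne₁], ?_, ?_, ?_⟩, ?_⟩
  · exact ht₁.2.1.append ht₂.2.1 (fun e he₁' he₂' =>
      hdisj e ((hmem₁ e).mp he₁') ((hmem₂ e).mp he₂'))
  · refine List.isChain_append.mpr ⟨ht₁.2.2.1, ht₂.2.2.1, ?_⟩
    intro x hx y hy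
    have hx' : x = l₁'.getLast hne₁ := by
      rw [List.getLast?_eq_getLast hne₁] at hx
      exact (Option.some.inj hx).symm ▸ rfl
    have hy' : y = f₂ := by
      rw [hh₂] at hy; exact Option.some.inj hy |>.symm ▸ rfl
    subst hx' hy'
    rw [ht₁.2.2.2 hne₁, hhead₁, hf₁, ← hf₂]
  · intro h'
    have hgl : (l₁' ++ l₂').getLast h' = l₂'.getLast hne₂ := List.getLast_append_of_ne_nil h' hne₂
    have hhd : (l₁' ++ l₂').head h' = l₁'.head hne₁ := List.head_append_of_ne_nil hne₁
    rw [hgl, hhd, ht₂.2.2.2 hne₂, hhead₂, hf₂, hhead₁, hf₁]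
  · intro e
    simp only [List.mem_append, hmem₁ e, hmem₂ e, Set.mem_union]

lemma interAdj_symm {a : Setoid E} {q₁ q₂ : Quotient a} (h : InterAdj src tgt a q₁ q₂) :
    InterAdj src tgt a q₂ q₁ := by
  obtain ⟨hne, e, f, he, hf, w, hw⟩ := h
  exact ⟨hne.symm, f, e, hf, he, w, Set.mem_inter hw.2 hw.1⟩

/-- Classes along a chained list are reachable from the head. -/
lemma chain_reach (a : Setoid E) {P : Set (Quotient a)} :
    ∀ (e : E) (l : List E), List.Chain' (fun e f => tgt e = src f) (e :: l) →
    (∀ g ∈ e :: l, Quotient.mk a g ∈ P) → ∀ f ∈ e :: l,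
    Relation.ReflTransGen
      (fun u v => u ∈ P ∧ v ∈ P ∧ u ≠ v ∧ InterAdj src tgt a u v)
      (Quotient.mk a e) (Quotient.mk a f) := by
  intro e l
  induction l generalizing e with
  | nil =>
    intro _ _ f hf
    rw [List.mem_singleton.mp hf]
  | cons e' t ih =>
    intro hch hP f hf
    rcases List.mem_cons.mp hf with rfl | hf'
    · exact Relation.ReflTransGen.refl
    · have hrest := ih e' (List.isChain_cons_cons.mp hch).2
        (fun g hg => hP g (List.mem_cons_of_mem _ hg)) f hf'
      by_cases heq : Quotient.mk a e = Quotient.mk a e'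
      · rwa [heq]
      · refine Relation.ReflTransGen.head ⟨hP e (by simp), hP e' (by simp), heq, ?_⟩ hrest
        refine ⟨heq, e, e', rfl, rfl, tgt e, ?_⟩
        exact ⟨Or.inr rfl, Or.inl (List.isChain_cons_cons.mp hch).1⟩

/-- The intersection graph of the `a`-classes meeting an Eulerian set is connected. -/
lemma conn_of_eulerian (a : Setoid E) {A : Set E} (hA : IsEulerianSet src tgt A) :
    ConnSet (InterAdj src tgt a) {p | ∃ x ∈ A, Quotient.mk a x = p} := by
  obtain ⟨l, ⟨hne, hnd, hch, hcl⟩, hmem⟩ := hA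
  match l, hne, hnd, hch with
  | e :: t, hne, hnd, hch =>
  set P : Set (Quotient a) := {p | ∃ x ∈ A, Quotient.mk a x = p} with hPdef
  have hP : ∀ g ∈ e :: t, Quotient.mk a g ∈ P := fun g hg => ⟨g, (hmem g).mp hg, rfl⟩
  have hreach := chain_reach a e t hch hP
  have hsymm : Symmetric (fun u v => u ∈ P ∧ v ∈ P ∧ u ≠ v ∧ InterAdj src tgt a u v) :=
    fun u v ⟨h1, h2, h3, h4⟩ => ⟨h2, h1, h3.symm, interAdj_symm h4⟩
  refine ⟨⟨Quotient.mk a e, hP e (by simp)⟩, ?_⟩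
  rintro x ⟨ex, hex, rfl⟩ y ⟨ey, hey, rfl⟩
  have hx := hreach ex ((hmem ex).mpr hex)
  have hy := hreach ey ((hmem ey).mpr hey)
  exact (@Std.Symm.symm _ _ (@Relation.ReflTransGen.stdSymm _ _ ⟨fun _ _ h => hsymm h⟩) _ _ hx).trans hy

/-- Crossing lemma: a refl-trans path from inside `S` to outside `S` crosses the boundary. -/
lemma cross {α : Type*} {R : α → α → Prop} {S : Set α} :
    ∀ {x y : α}, Relation.ReflTransGen R x y → x ∈ S → y ∉ S →
      ∃ u ∈ S, ∃ v, v ∉ S ∧ R u v := by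
  intro x y h
  induction h with
  | refl => intro hx hy; exact absurd hx hy
  | @tail b c h' step ih =>
    intro hx hy
    by_cases hb : b ∈ S
    · exact ⟨b, hb, c, hy, step⟩
    · exact ih hx hb

end Aux

section Grow
variable {V E : Type*} [Finite E] {src tgt : E → V}

lemma grow (a : Setoid E) (ha : ∀ x : E, IsCycleSet src tgt {y | a.r x y})
    {Q : Set (Quotient a)} (hQ : ConnSet (InterAdj src tgt a) Q) :
    ∀ n : ℕ, ∀ S : Set (Quotient a), (Q \ S).ncard ≤ n → S ⊆ Q → S.Nonempty →
    IsEulerianSet src tgt {y | Quotient.mk a y ∈ S} →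
    IsEulerianSet src tgt {y | Quotient.mk a y ∈ Q} := by
  have hQfin : ∀ S : Set (Quotient a), (Q \ S).Finite := fun S => Set.toFinite _
  intro n
  induction n with
  | zero =>
    intro S hcard hSQ _ hE
    have : Q \ S = ∅ := (Set.ncard_eq_zero (hQfin S)).mp (Nat.le_zero.mp hcard)
    have hQS : Q = S := Set.Subset.antisymm (fun q hq => by
      by_contra hq'; exact absurd (Set.mem_diff_of_mem hq hq') (this ▸ Set.notMem_empty q)) hSQ
    rwa [hQS]
  | succ n ih =>
    intro S hcard hSQ hSne hE
    by_cases hQS : Q ⊆ S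
    · have : Q = S := Set.Subset.antisymm hQS hSQ
      rwa [this]
    · obtain ⟨q₀, hq₀Q, hq₀S⟩ := Set.not_subset.mp hQS
      obtain ⟨s₀, hs₀⟩ := hSne
      have hpath := hQ.2 s₀ (hSQ hs₀) q₀ hq₀Q
      obtain ⟨u, huS, qv, hqvS, hR⟩ := cross hpath hs₀ hq₀S
      obtain ⟨-, hqvQ, hne, hadj⟩ := hR
      obtain ⟨-, e₀, f₀, he₀, hf₀, w, hw₁, hw₂⟩ := hadj
      obtain ⟨l₂, hl₂, -⟩ := ha f₀
      obtain ⟨l₁, hl₁⟩ := hE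
      have he₀l : e₀ ∈ l₁ := (hl₁.2 e₀).mpr (by show Quotient.mk a e₀ ∈ S; rw [he₀]; exact huS)
      have hf₀l : f₀ ∈ l₂ := (hl₂.2 f₀).mpr (a.refl f₀)
      have hclass : {y | a.r f₀ y} = {y | Quotient.mk a y ∈ ({qv} : Set (Quotient a))} := by
        ext y
        simp only [Set.mem_setOf_eq, Set.mem_singleton_iff, ← hf₀]
        exact ⟨fun h => Quotient.sound (a.symm h), fun h => a.symm (Quotient.exact h)⟩
      have hdisj : ∀ e, e ∈ {y | Quotient.mk a y ∈ S} → e ∉ {y | a.r f₀ y} := by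
        intro e heS hef
        rw [hclass] at hef
        simp only [Set.mem_setOf_eq, Set.mem_singleton_iff] at hef heS
        exact hqvS (hef ▸ heS)
      have hw₁' : w = src e₀ ∨ w = tgt e₀ := by
        rcases hw₁ with h | h
        · exact Or.inl h
        · exact Or.inr h
      have hw₂' : w = src f₀ ∨ w = tgt f₀ := by
        rcases hw₂ with h | h
        · exact Or.inl h
        · exact Or.inr h
      have hspliced := splice hl₁ hl₂ hdisj ⟨e₀, he₀l, hw₁'⟩ ⟨f₀, hf₀l, hw₂'⟩
      have hunion : {y | Quotient.mk a y ∈ S} ∪ {y | a.r f₀ y}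
          = {y | Quotient.mk a y ∈ insert qv S} := by
        rw [hclass]; ext y
        simp only [Set.mem_union, Set.mem_setOf_eq, Set.mem_singleton_iff, Set.mem_insert_iff]
        tauto
      rw [hunion] at hspliced
      refine ih (insert qv S) ?_ (Set.insert_subset hqvQ hSQ) ⟨qv, Set.mem_insert _ _⟩ hspliced
      have hss : Q \ insert qv S ⊂ Q \ S := by
        constructor
        · intro x hx
          simp only [Set.mem_diff, Set.mem_insert_iff, not_or] at hx ⊢
          exact ⟨hx.1, hx.2.2⟩
        · intro hsub
          have hqv : qv ∈ Q \ S := ⟨hqvQ, hqvS⟩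
          have := hsub hqv
          simp at this
      have := Set.ncard_lt_ncard hss (hQfin S)
      omega

lemma eulerian_of_conn (a : Setoid E) (ha : ∀ x : E, IsCycleSet src tgt {y | a.r x y})
    {Q : Set (Quotient a)} (hQ : ConnSet (InterAdj src tgt a) Q) :
    IsEulerianSet src tgt {y | Quotient.mk a y ∈ Q} := by
  obtain ⟨q, hq⟩ := hQ.1
  obtain ⟨x, rfl⟩ := Quotient.exists_rep q
  have hbase : IsEulerianSet src tgt {y | Quotient.mk a y ∈ ({Quotient.mk a x} : Set _)} := by
    obtain ⟨l, hl, -⟩ := ha x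
    refine ⟨l, hl.1, fun e => (hl.2 e).trans ?_⟩
    simp only [Set.mem_setOf_eq, Set.mem_singleton_iff]
    exact ⟨fun h => Quotient.sound (a.symm h), fun h => a.symm (Quotient.exact h)⟩
  exact grow a ha hQ (Q \ {Quotient.mk a x}).ncard {Quotient.mk a x} le_rfl
    (Set.singleton_subset_iff.mpr hq) (Set.singleton_nonempty _) hbase

end Grow

section S
variable {E : Type*}

/-- Push a coarser setoid down to the quotient. -/
def mapS (a b : Setoid E) (hab : a ≤ b) : Setoid (Quotient a) where
  r q₁ q₂ := ∃ e f : E, Quotient.mk a e = q₁ ∧ Quotient.mk a f = q₂ ∧ b.r e f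
  iseqv := by
    constructor
    · intro q
      induction q using Quotient.ind with
      | _ e => exact ⟨e, e, rfl, rfl, b.refl e⟩
    · rintro q₁ q₂ ⟨e, f, h1, h2, h3⟩
      exact ⟨f, e, h2, h1, b.symm h3⟩
    · rintro q₁ q₂ q₃ ⟨e, f, h1, h2, h3⟩ ⟨f', g, h2', h3', h4⟩
      have : a.r f f' := Quotient.exact (h2.trans h2'.symm)
      exact ⟨e, g, h1, h3', b.trans h3 (b.trans (hab this) h4)⟩

/-- Pull a setoid on the quotient back to `E`. -/
def comapS (a : Setoid E) (s : Setoid (Quotient a)) : Setoid E where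
  r e f := s.r (Quotient.mk a e) (Quotient.mk a f)
  iseqv := ⟨fun _ => s.refl _, fun h => s.symm h, fun h h' => s.trans h h'⟩

lemma comapS_mapS (a b : Setoid E) (hab : a ≤ b) : comapS a (mapS a b hab) = b := by
  apply Setoid.ext
  intro e f
  constructor
  · rintro ⟨e', f', he', hf', hb⟩
    have h1 : a.r e' e := Quotient.exact he'
    have h2 : a.r f' f := Quotient.exact hf'
    exact b.trans (b.symm (hab h1)) (b.trans hb (hab h2))
  · intro h
    exact ⟨e, f, rfl, rfl, h⟩

lemma mapS_comapS (a : Setoid E) (s : Setoid (Quotient a)) (h : a ≤ comapS a s) :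
    mapS a (comapS a s) h = s := by
  apply Setoid.ext
  intro q₁ q₂
  constructor
  · rintro ⟨e, f, rfl, rfl, hb⟩
    exact hb
  · intro h'
    obtain ⟨e, rfl⟩ := Quotient.exists_rep q₁
    obtain ⟨f, rfl⟩ := Quotient.exists_rep q₂
    exact ⟨e, f, rfl, rfl, h'⟩

lemma le_comapS (a : Setoid E) (s : Setoid (Quotient a)) : a ≤ comapS a s := by
  intro e f h
  show s.r _ _
  rw [Quotient.sound h]

lemma mapS_mono {a b b' : Setoid E} (hab : a ≤ b) (hab' : a ≤ b') (h : b ≤ b') :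
    mapS a b hab ≤ mapS a b' hab' := by
  rintro q₁ q₂ ⟨e, f, h1, h2, h3⟩
  exact ⟨e, f, h1, h2, h h3⟩

end S

/-- For a connected Eulerian digraph `D` and a partition `a` of `E(D)` into directed
cycles (a minimal element of `T(D)`), the up-set of `a` in `T(D)` is lattice-isomorphic
to the bond lattice `L(G_a)` of the intersection graph of the cycles of `a`: partitions
of the cycles of `a` into connected groups. The isomorphism sends `{D₁, …, D_k}` to the
partition of `a` grouping cycles lying in the same block `D_i`. -/
theorem upset_iso_bond_lattice {V E : Type*} [Fintype V] [Fintype E]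
    (src tgt : E → V) (hD : IsEulerianSet src tgt Set.univ)
    (a : Setoid E) (ha : ∀ x : E, IsCycleSet src tgt {y | a.r x y}) :
    ∃ iso : {b : Setoid E // EulerianPartition src tgt b ∧ a ≤ b} ≃o
        {s : Setoid (Quotient a) //
          ∀ q : Quotient a, ConnSet (InterAdj src tgt a) {p | s.r q p}},
      ∀ (b : {b : Setoid E // EulerianPartition src tgt b ∧ a ≤ b})
        (q₁ q₂ : Quotient a),
        (iso b).1.r q₁ q₂ ↔ ∃ e f : E, Quotient.mk a e = q₁ ∧
          Quotient.mk a f = q₂ ∧ b.1.r e f := by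
  classical
  have forward : ∀ (b : Setoid E) (hb : EulerianPartition src tgt b) (hab : a ≤ b)
      (q : Quotient a), ConnSet (InterAdj src tgt a) {p | (mapS a b hab).r q p} := by
    intro b hb hab q
    obtain ⟨e, rfl⟩ := Quotient.exists_rep q
    have hset : {p | (mapS a b hab).r (Quotient.mk a e) p}
        = {p | ∃ x ∈ {y | b.r e y}, Quotient.mk a x = p} := by
      ext p
      simp only [Set.mem_setOf_eq]
      constructor
      · rintro ⟨e', f, he', hf, hr⟩
        have h1 : a.r e' e := Quotient.exact he'
        exact ⟨f, b.trans (b.symm (hab h1)) hr, hf⟩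
      · rintro ⟨f, hf, rfl⟩
        exact ⟨e, f, rfl, rfl, hf⟩
    rw [hset]
    exact conn_of_eulerian a (hb e)
  have backward : ∀ (s : Setoid (Quotient a)),
      (∀ q, ConnSet (InterAdj src tgt a) {p | s.r q p}) →
      EulerianPartition src tgt (comapS a s) := by
    intro s hs x
    have hset : {y | (comapS a s).r x y}
        = {y | Quotient.mk a y ∈ {p | s.r (Quotient.mk a x) p}} := rfl
    rw [hset]
    exact eulerian_of_conn a ha (hs (Quotient.mk a x))
  refine ⟨⟨⟨fun b => ⟨mapS a b.1 b.2.2, forward b.1 b.2.1 b.2.2⟩,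
      fun s => ⟨comapS a s.1, backward s.1 s.2, le_comapS a s.1⟩, ?_, ?_⟩, ?_⟩,
      fun b q₁ q₂ => Iff.rfl⟩
  · intro b
    exact Subtype.ext (comapS_mapS a b.1 b.2.2)
  · intro s
    exact Subtype.ext (mapS_comapS a s.1 (le_comapS a s.1))
  · intro b b'
    constructor
    · intro h e f hr
      have := h ⟨e, f, rfl, rfl, hr⟩
      obtain ⟨e', f', he', hf', hr'⟩ := this
      have h1 : a.r e' e := Quotient.exact he'
      have h2 : a.r f' f := Quotient.exact hf'
      exact b'.1.trans (b'.1.symm (b'.2.2 h1)) (b'.1.trans hr' (b'.2.2 h2))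
    · intro h
      exact mapS_mono b.2.2 b'.2.2 h
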